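/- arXiv:0902.3714 — 2 statements merged into one kernel-verified Lean document; each statement's English description precedes it below -/
import Mathlib

section
/- Let p ≥ 1 and let B and B̂ be real p×p matrices such that B is symmetric, I−B is invertible, and the diagonal entries satisfy B_{ii} = B̂_{ii} = 0 for the fixed index i. Set Δ = B − B̂. Then the i-th diagonal entry of the matrix (I−B̂)(I−B)^{-1}(I−B̂)ᵀ equals 1 + Δ_{i•}(I−B)^{-1}Δ_{i•}ᵀ, where Δ_{i•} denotes the i-th row of Δ. -/
open Matrix

/-- variance identity in the proof of Theorem 3: if `B` is symmetric, `I − B`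
is invertible, and `B_{ii} = B̂_{ii} = 0`, then the `i`-th diagonal entry of
`(I−B̂)(I−B)⁻¹(I−B̂)ᵀ` equals `1 + Δ_{i•}(I−B)⁻¹Δ_{i•}ᵀ`, where `Δ = B − B̂`. -/
theorem stmt3 {p : ℕ} (hp : 1 ≤ p) (B Bhat : Matrix (Fin p) (Fin p) ℝ)
    (hB : B.IsSymm) (hInv : IsUnit (1 - B)) (i : Fin p)
    (hBii : B i i = 0) (hBhatii : Bhat i i = 0) :
    (((1 - Bhat) * (1 - B)⁻¹ * (1 - Bhat)ᵀ : Matrix (Fin p) (Fin p) ℝ)) i i =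
      1 + (B - Bhat) i ⬝ᵥ ((1 - B)⁻¹ *ᵥ (B - Bhat) i) := by
  set A := (1 - B : Matrix (Fin p) (Fin p) ℝ) with hAdef
  set D := (B - Bhat : Matrix (Fin p) (Fin p) ℝ) with hDdef
  have hAT : Aᵀ = A := by
    rw [hAdef, transpose_sub, transpose_one, hB.eq]
  have hdet : IsUnit A.det := (Matrix.isUnit_iff_isUnit_det _).mp hInv
  have hAAinv : A * A⁻¹ = 1 := Matrix.mul_nonsing_inv _ hdet
  have hAinvA : A⁻¹ * A = 1 := Matrix.nonsing_inv_mul _ hdet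
  have h1 : (1 - Bhat : Matrix (Fin p) (Fin p) ℝ) = A + D := by
    rw [hAdef, hDdef]; abel
  have key : (1 - Bhat) * A⁻¹ * (1 - Bhat)ᵀ = A + Dᵀ + D + D * A⁻¹ * Dᵀ := by
    rw [h1, transpose_add, hAT]
    rw [add_mul, hAAinv, add_mul, one_mul, mul_add, mul_assoc D A⁻¹ A, hAinvA, mul_one]
    abel
  rw [key]
  have hDii : D i i = 0 := by
    rw [hDdef]; simp [hBii, hBhatii]
  have hAii : A i i = 1 := by
    rw [hAdef]; simp [hBii]
  have hprod : (D * A⁻¹ * Dᵀ) i i = D i ⬝ᵥ (A⁻¹ *ᵥ D i) := by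
    simp only [Matrix.mul_apply, Matrix.mulVec, dotProduct, Finset.mul_sum,
      Finset.sum_mul, Matrix.transpose_apply]
    rw [Finset.sum_comm]
    refine Finset.sum_congr rfl fun x _ => Finset.sum_congr rfl fun y _ => by ring
  simp [Matrix.add_apply, Matrix.transpose_apply, hDii, hAii, hprod]
end

section
/- Lemma 1: Let A be the adjacency matrix of a simple undirected graph G on p vertices in which every vertex has degree d_i ≥ 1, let D = diag(d_1,…,d_p), let d_max = max_i d_i, and let q > 0. Suppose the matrix M = I + q D^{-1/2} A D^{-1/2} is positive definite, suppose n > d_max, and suppose the eigenvalue-ratio condition λ_max(M^{-1})/λ_min(M^{-1}) ≤ ((1+√(d_max/n))/(1−√(d_max/n)))² holds. Then λ_max(M^{-1}) ≤ (√(d_max)/(q+√(d_max))) · ((1+√(d_max/n))/(1−√(d_max/n)))². -/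
open Matrix
open scoped Classical

/-- The largest eigenvalue of a (Hermitian) real matrix; junk value `0` otherwise. -/
noncomputable def lmax {n : Type*} [Fintype n] [DecidableEq n] (M : Matrix n n ℝ) : ℝ :=
  if h : M.IsHermitian then ⨆ i, h.eigenvalues i else 0

/-- The smallest eigenvalue of a (Hermitian) real matrix; junk value `0` otherwise. -/
noncomputable def lmin {n : Type*} [Fintype n] [DecidableEq n] (M : Matrix n n ℝ) : ℝ :=
  if h : M.IsHermitian then ⨅ i, h.eigenvalues i else 0

/-- The matrix `I + q D^{-1/2} A D^{-1/2}`, where `D = diag(d)`. -/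
noncomputable def Mmat {p : ℕ} (q : ℝ) (A : Matrix (Fin p) (Fin p) ℝ) (d : Fin p → ℝ) :
    Matrix (Fin p) (Fin p) ℝ :=
  1 + q • (Matrix.diagonal (fun i => (Real.sqrt (d i))⁻¹) * A *
    Matrix.diagonal (fun i => (Real.sqrt (d i))⁻¹))

/-- If a Hermitian real matrix has eigenvector `v` with value `c`, then `c` appears among
`hB.eigenvalues`. -/
lemma eig_of_eigenvector {n : Type*} [Fintype n] [DecidableEq n] {B : Matrix n n ℝ}
    (hB : B.IsHermitian) {v : n → ℝ} (hv : v ≠ 0) {c : ℝ} (h : B *ᵥ v = c • v) :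
    ∃ i, hB.eigenvalues i = c := by
  classical
  set U : Matrix n n ℝ := (hB.eigenvectorUnitary : Matrix n n ℝ)
  have hU1 : star U * U = 1 := (Matrix.mem_unitaryGroup_iff').mp hB.eigenvectorUnitary.2
  have hU2 : U * star U = 1 := (Matrix.mem_unitaryGroup_iff).mp hB.eigenvectorUnitary.2
  set w : n → ℝ := star U *ᵥ v with hw
  have hwv : U *ᵥ w = v := by
    rw [hw, Matrix.mulVec_mulVec, hU2, Matrix.one_mulVec]
  have hwne : w ≠ 0 := by
    intro h0
    apply hv
    rw [← hwv, h0, Matrix.mulVec_zero]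
  have hdiag : Matrix.diagonal hB.eigenvalues *ᵥ w = c • w := by
    have hspec := hB.spectral_theorem
    have : (RCLike.ofReal ∘ hB.eigenvalues : n → ℝ) = hB.eigenvalues := by
      funext i; simp
    rw [this, Unitary.conjStarAlgAut_apply] at hspec
    have hBv : (U * Matrix.diagonal hB.eigenvalues * star U) *ᵥ v = c • v := by
      rw [← hspec]; exact h
    have := congrArg (fun x => star U *ᵥ x) hBv
    simp only [Matrix.mulVec_mulVec, Matrix.mulVec_smul] at this
    rw [← mul_assoc, ← mul_assoc, hU1, one_mul] at this
    rw [show w = star U *ᵥ v from hw, Matrix.mulVec_mulVec]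
    exact this
  obtain ⟨i, hi⟩ := Function.ne_iff.mp hwne
  refine ⟨i, ?_⟩
  have := congrFun hdiag i
  rw [Matrix.mulVec_diagonal] at this
  simp only [Pi.smul_apply, smul_eq_mul] at this
  exact mul_right_cancel₀ hi this

/-- Lemma 1 of the paper: if `M = I + q D^{-1/2} A D^{-1/2}` is positive
definite, `n > d_max`, and the eigenvalue-ratio condition
`λ_max(M⁻¹)/λ_min(M⁻¹) ≤ ((1+√(d_max/n))/(1−√(d_max/n)))²` holds, then
`λ_max(M⁻¹) ≤ (√d_max/(q+√d_max)) ((1+√(d_max/n))/(1−√(d_max/n)))²`. -/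


theorem stmt6 {p : ℕ} (hp : 0 < p) (A : Matrix (Fin p) (Fin p) ℝ)
    (hsym : A.IsSymm) (h01 : ∀ i j, A i j = 0 ∨ A i j = 1) (hdiag : ∀ i, A i i = 0)
    (d : Fin p → ℝ) (hd : ∀ i, d i = ∑ j, A i j) (hd1 : ∀ i, 1 ≤ d i)
    (dmax : ℝ) (hdmax : IsGreatest (Set.range d) dmax)
    (q : ℝ) (hq : 0 < q)
    (hM : (Mmat q A d).PosDef)
    (n : ℕ) (hn : dmax < (n : ℝ))
    (hratio : lmax (Mmat q A d)⁻¹ / lmin (Mmat q A d)⁻¹ ≤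
      ((1 + Real.sqrt (dmax / n)) / (1 - Real.sqrt (dmax / n))) ^ 2) :
    lmax (Mmat q A d)⁻¹ ≤ (Real.sqrt dmax / (q + Real.sqrt dmax)) *
      ((1 + Real.sqrt (dmax / n)) / (1 - Real.sqrt (dmax / n))) ^ 2 := by

  classical
  set M := Mmat q A d with hMdef
  haveI : Nonempty (Fin p) := ⟨⟨0, hp⟩⟩
  have i0 : Fin p := ⟨0, hp⟩
  have hd0 : ∀ i, (0:ℝ) < d i := fun i => lt_of_lt_of_le one_pos (hd1 i)
  have hsq : ∀ i, Real.sqrt (d i) ≠ 0 := fun i => ne_of_gt (Real.sqrt_pos.mpr (hd0 i))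
  set v : Fin p → ℝ := fun i => Real.sqrt (d i) with hv
  set f : Fin p → ℝ := fun i => (Real.sqrt (d i))⁻¹ with hf
  have step1 : Matrix.diagonal f *ᵥ v = fun _ => (1:ℝ) := by
    funext i
    rw [Matrix.mulVec_diagonal]
    exact inv_mul_cancel₀ (hsq i)
  have step2 : A *ᵥ (fun _ => (1:ℝ)) = d := by
    funext i
    simp only [Matrix.mulVec, dotProduct, mul_one]
    exact (hd i).symm
  have step3 : Matrix.diagonal f *ᵥ d = v := by
    funext i
    rw [Matrix.mulVec_diagonal]
    simp only [hf, hv]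
    rw [inv_mul_eq_div, div_eq_iff (hsq i)]
    exact (Real.mul_self_sqrt (hd0 i).le).symm
  have hN : (Matrix.diagonal f * A * Matrix.diagonal f) *ᵥ v = v := by
    rw [← Matrix.mulVec_mulVec, ← Matrix.mulVec_mulVec, step1, step2, step3]
  have h1q : (0:ℝ) < 1 + q := by linarith
  have hMv : M *ᵥ v = (1 + q) • v := by
    rw [hMdef, Mmat, Matrix.add_mulVec, Matrix.one_mulVec, Matrix.smul_mulVec, hN,
      add_smul, one_smul]
  have hvne : v ≠ 0 := by
    intro h0
    have := congrFun h0 i0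
    simp only [hv, Pi.zero_apply] at this
    exact hsq i0 this
  have hMinvPD : (M⁻¹).PosDef := hM.inv
  have hHerm : (M⁻¹).IsHermitian := hMinvPD.isHermitian
  have hdet : IsUnit M.det := isUnit_iff_ne_zero.mpr (ne_of_gt hM.det_pos)
  have hMinvv : M⁻¹ *ᵥ v = (1 + q)⁻¹ • v := by
    have h1 : M⁻¹ *ᵥ (M *ᵥ v) = v := by
      rw [Matrix.mulVec_mulVec, Matrix.nonsing_inv_mul M hdet, Matrix.one_mulVec]
    rw [hMv, Matrix.mulVec_smul] at h1
    rw [eq_comm, inv_smul_eq_iff₀ (ne_of_gt h1q)]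
    exact h1.symm
  obtain ⟨j0, hj0⟩ := eig_of_eigenvector hHerm hvne hMinvv
  have hlmin_def : lmin M⁻¹ = ⨅ i, hHerm.eigenvalues i := by
    rw [lmin, dif_pos hHerm]
  have hlmax_def : lmax M⁻¹ = ⨆ i, hHerm.eigenvalues i := by
    rw [lmax, dif_pos hHerm]
  have hm_le : lmin M⁻¹ ≤ (1 + q)⁻¹ := by
    rw [hlmin_def, ← hj0]
    exact ciInf_le (Finite.bddBelow_range _) j0
  have hm_pos : 0 < lmin M⁻¹ := by
    rw [hlmin_def]
    obtain ⟨k, hk⟩ := exists_eq_ciInf_of_finite (f := hHerm.eigenvalues)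
    rw [← hk]
    exact hMinvPD.eigenvalues_pos k
  set R : ℝ := ((1 + Real.sqrt (dmax / n)) / (1 - Real.sqrt (dmax / n))) ^ 2 with hR
  have hRnn : 0 ≤ R := sq_nonneg _
  have hL : lmax M⁻¹ ≤ R * lmin M⁻¹ := (div_le_iff₀ hm_pos).mp hratio
  have hs1 : 1 ≤ Real.sqrt dmax := by
    have h1d : (1:ℝ) ≤ dmax := le_trans (hd1 i0) (hdmax.2 ⟨i0, rfl⟩)
    calc (1:ℝ) = Real.sqrt 1 := Real.sqrt_one.symm
      _ ≤ Real.sqrt dmax := Real.sqrt_le_sqrt h1d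
  have hqs : (0:ℝ) < q + Real.sqrt dmax := by linarith
  have hkey : (1 + q)⁻¹ ≤ Real.sqrt dmax / (q + Real.sqrt dmax) := by
    rw [inv_eq_one_div, div_le_div_iff₀ h1q hqs]
    nlinarith
  calc lmax M⁻¹ ≤ R * lmin M⁻¹ := hL
    _ ≤ R * (1 + q)⁻¹ := mul_le_mul_of_nonneg_left hm_le hRnn
    _ ≤ R * (Real.sqrt dmax / (q + Real.sqrt dmax)) := mul_le_mul_of_nonneg_left hkey hRnn
    _ = Real.sqrt dmax / (q + Real.sqrt dmax) * R := mul_comm _ _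
end
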